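/- arXiv:1901.01123 — 8 statements merged into one kernel-verified Lean document; each statement's English description precedes it below -/
import Mathlib

section
/- The pair (Θ⁰,Φ⁰) solves the traveling-wave system with unit speed: for every z<0, (Θ⁰)''(z)+(Θ⁰)'(z)+AΦ⁰(z)=0 and Le⁻¹(Φ⁰)''(z)+(Φ⁰)'(z)−AΦ⁰(z)=0, and for every z>0, (Θ⁰)''(z)+(Θ⁰)'(z)=0 and Le⁻¹(Φ⁰)''(z)+(Φ⁰)'(z)=0. -/
open Real Filter Topology

/-- The temperature component of the traveling wave. -/
noncomputable def Theta0 (θi Le : ℝ) : ℝ → ℝ := fun z =>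
  if z < 0 then 1 - (1 - θi) * Real.exp ((θi / (1 - θi)) * z)
  else θi * Real.exp (-z)

/-- The concentration component of the traveling wave. -/
noncomputable def Phi0 (θi Le : ℝ) : ℝ → ℝ := fun z =>
  if z < 0 then
    (θi / ((θi / (1 - θi) * (1 + θi / (Le * (1 - θi)))) * (1 - θi))) *
      Real.exp ((θi / (1 - θi)) * z)
  else
    1 + (θi / ((θi / (1 - θi) * (1 + θi / (Le * (1 - θi)))) * (1 - θi)) - 1) *
      Real.exp (-Le * z)

/-! On each open half-line both components agree near every point with a profile
`c * exp (b * z) + d`, so each equation reduces to an identity among `c`, `b` and the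
coefficients. For `z < 0` the first one is `A * (Θᵢ / (A (1 - Θᵢ))) = m = Θᵢ (m + 1)` and
the second is `A = m + m² / Le`. -/
theorem deriv_const_mul_exp_mul_add (c b d : ℝ) :
    deriv (fun y => c * exp (b * y) + d) = fun y => c * b * exp (b * y) := by
  funext y
  have h := (((hasDerivAt_id y).const_mul b).exp.const_mul c).add_const d
  simpa [mul_assoc, mul_comm] using h.deriv

theorem Filter.EventuallyEq.deriv_deriv_const_mul_exp_mul_add {f : ℝ → ℝ} {z c b d : ℝ}
    (hf : f =ᶠ[𝓝 z] fun y => c * exp (b * y) + d) :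
    deriv f z = c * b * exp (b * z) ∧ deriv (deriv f) z = c * b ^ 2 * exp (b * z) := by
  have hf' : deriv f =ᶠ[𝓝 z] fun y => c * b * exp (b * y) + 0 := by
    simpa only [add_zero, deriv_const_mul_exp_mul_add] using hf.deriv
  refine ⟨by rw [hf.deriv_eq, deriv_const_mul_exp_mul_add], ?_⟩
  rw [hf'.deriv_eq, deriv_const_mul_exp_mul_add]
  ring

theorem ite_lt_zero_eventuallyEq_of_neg (f g : ℝ → ℝ) {z : ℝ} (hz : z < 0) :
    (fun y => if y < 0 then f y else g y) =ᶠ[𝓝 z] f := by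
  filter_upwards [Iio_mem_nhds hz] with y hy using if_pos hy

theorem ite_lt_zero_eventuallyEq_of_pos (f g : ℝ → ℝ) {z : ℝ} (hz : 0 < z) :
    (fun y => if y < 0 then f y else g y) =ᶠ[𝓝 z] g := by
  filter_upwards [Ioi_mem_nhds hz] with y hy using if_neg (not_lt.mpr hy.le)

section Profiles

variable (θi Le : ℝ) {z : ℝ}

theorem Theta0_eventuallyEq_of_neg (hz : z < 0) :
    Theta0 θi Le =ᶠ[𝓝 z] fun y => -(1 - θi) * exp (θi / (1 - θi) * y) + 1 :=
  (ite_lt_zero_eventuallyEq_of_neg _ _ hz).trans (.of_eq (by funext y; ring))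

theorem Theta0_eventuallyEq_of_pos (hz : 0 < z) :
    Theta0 θi Le =ᶠ[𝓝 z] fun y => θi * exp (-1 * y) + 0 :=
  (ite_lt_zero_eventuallyEq_of_pos _ _ hz).trans (.of_eq (by funext y; simp))

theorem Phi0_eventuallyEq_of_neg (hz : z < 0) :
    Phi0 θi Le =ᶠ[𝓝 z] fun y =>
      θi / ((θi / (1 - θi) * (1 + θi / (Le * (1 - θi)))) * (1 - θi)) *
        exp (θi / (1 - θi) * y) + 0 :=
  (ite_lt_zero_eventuallyEq_of_neg _ _ hz).trans (.of_eq (by funext y; simp))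

theorem Phi0_eventuallyEq_of_pos (hz : 0 < z) :
    Phi0 θi Le =ᶠ[𝓝 z] fun y =>
      (θi / ((θi / (1 - θi) * (1 + θi / (Le * (1 - θi)))) * (1 - θi)) - 1) *
        exp (-Le * y) + 1 :=
  (ite_lt_zero_eventuallyEq_of_pos _ _ hz).trans (.of_eq (by funext y; ring))

end Profiles

/-- the pair (Θ⁰,Φ⁰) solves the traveling-wave system with unit
speed, with A = (Θᵢ/(1−Θᵢ))(1+Θᵢ/(Le(1−Θᵢ))). -/
theorem traveling_wave_solves_system (θi Le : ℝ) (hθ : θi ∈ Set.Ioo (0:ℝ) 1) (hLe : 1 < Le) :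
    (∀ z < (0:ℝ),
      deriv (deriv (Theta0 θi Le)) z + deriv (Theta0 θi Le) z +
        (θi / (1 - θi) * (1 + θi / (Le * (1 - θi)))) * Phi0 θi Le z = 0 ∧
      Le⁻¹ * deriv (deriv (Phi0 θi Le)) z + deriv (Phi0 θi Le) z -
        (θi / (1 - θi) * (1 + θi / (Le * (1 - θi)))) * Phi0 θi Le z = 0) ∧
    (∀ z > (0:ℝ),
      deriv (deriv (Theta0 θi Le)) z + deriv (Theta0 θi Le) z = 0 ∧
      Le⁻¹ * deriv (deriv (Phi0 θi Le)) z + deriv (Phi0 θi Le) z = 0) := by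
  obtain ⟨hθ0, hθ1⟩ := hθ
  have h1θ : 1 - θi ≠ 0 := by linarith
  have hA : θi / (1 - θi) * (1 + θi / (Le * (1 - θi))) ≠ 0 := by
    have : 0 < 1 - θi := by linarith
    have : 0 < Le := by linarith
    positivity
  refine ⟨fun z hz => ?_, fun z hz => ?_⟩
  · obtain ⟨hT1, hT2⟩ := (Theta0_eventuallyEq_of_neg θi Le hz).deriv_deriv_const_mul_exp_mul_add
    obtain ⟨hP1, hP2⟩ := (Phi0_eventuallyEq_of_neg θi Le hz).deriv_deriv_const_mul_exp_mul_add
    rw [hT1, hT2, hP1, hP2, (Phi0_eventuallyEq_of_neg θi Le hz).eq_of_nhds]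
    constructor <;> field_simp <;> ring
  · obtain ⟨hT1, hT2⟩ := (Theta0_eventuallyEq_of_pos θi Le hz).deriv_deriv_const_mul_exp_mul_add
    obtain ⟨hP1, hP2⟩ := (Phi0_eventuallyEq_of_pos θi Le hz).deriv_deriv_const_mul_exp_mul_add
    rw [hT1, hT2, hP1, hP2]
    constructor <;> field_simp <;> ring
end

section
/- The pair (u,v)=((Θ⁰)',(Φ⁰)') is an eigenfunction of the linearized operator with eigenvalue 0: u and v are continuous at 0; u''+u'+Av=0 and Le⁻¹v''+v'−Av=0 on (−∞,0); u''+u'=0 and Le⁻¹v''+v'=0 on (0,∞); the transmission conditions u'(0⁺)−u'(0⁻) = −u(0)/(1−Θᵢ) and v'(0⁺)−v'(0⁻) = Le·u(0)/(1−Θᵢ) hold; and the weighted suprema sup_{ξ<0} e^{ξ/2}|u(ξ)|, sup_{ξ>0} e^{ξ/2}|u(ξ)|, sup_{ξ<0} e^{ξ/2}|v(ξ)| and sup_{ξ>0} e^{Le·ξ/2}|v(ξ)| are all finite. -/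
open Real Filter Topology

open Set

/-!
On each closed half-line both components of the wave have the form `a + b * exp (k * z)`
(`expAffine a b k`), so away from `0` all derivatives are explicit exponentials and every claim
reduces to an identity between coefficients. With `m = θᵢ/(1-θᵢ)` and `B = θᵢ/(A(1-θᵢ)) = Φ⁰(0)`
these are `(1 - θᵢ)(1 + m) = 1`, `A B = m`, `A = m + m²/Le` and `B (m + Le) = Le`. The last one
says that the one-sided slopes of `Φ⁰` agree at `0`, which (with the same fact for `Θ⁰`) makes
`u` and `v` continuous there. The weighted bounds hold because on each half-line the weight grows
no faster than the exponential it multiplies decays.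
-/

noncomputable def expAffine (a b k : ℝ) : ℝ → ℝ := fun z => a + b * exp (k * z)

section ExpAffine

variable {f : ℝ → ℝ} {s : Set ℝ} {a b k c d l : ℝ}

theorem hasDerivAt_expAffine (a b k x : ℝ) :
    HasDerivAt (expAffine a b k) (b * k * exp (k * x)) x := by
  refine ((((hasDerivAt_id' x).const_mul k).exp.const_mul b).const_add a).congr_deriv ?_
  ring

theorem deriv_expAffine (a b k : ℝ) : deriv (expAffine a b k) = expAffine 0 (b * k) k := by
  funext x
  simp [(hasDerivAt_expAffine a b k x).deriv, expAffine]

theorem eqOn_deriv_expAffine (hs : IsOpen s) (h : EqOn f (expAffine a b k) s) :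
    EqOn (deriv f) (expAffine 0 (b * k) k) s := by
  simpa only [deriv_expAffine] using h.deriv hs

theorem exists_bound_exp_mul_abs_deriv {ω : ℝ → ℝ} (hs : IsOpen s)
    (h : EqOn f (expAffine a b k) s) (hω : ∀ ξ ∈ s, ω ξ + k * ξ ≤ 0) :
    ∃ C, ∀ ξ ∈ s, exp (ω ξ) * |deriv f ξ| ≤ C := by
  refine ⟨|b * k|, fun ξ hξ => ?_⟩
  calc exp (ω ξ) * |deriv f ξ| = |b * k| * exp (ω ξ + k * ξ) := by
        rw [eqOn_deriv_expAffine hs h hξ, expAffine, zero_add, abs_mul _ (exp _), abs_exp, exp_add]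
        ring
    _ ≤ |b * k| := mul_le_of_le_one_right (abs_nonneg _) (exp_le_one_iff.mpr (hω ξ hξ))

theorem tendsto_deriv_deriv_of_eqOn_expAffine (hs : IsOpen s)
    (h : EqOn f (expAffine a b k) s) :
    Tendsto (deriv (deriv f)) (𝓝[s] 0) (𝓝 (b * k * k)) := by
  have hcont : Tendsto (expAffine 0 (b * k * k) k) (𝓝[s] 0) (𝓝 (b * k * k)) := by
      simpa [expAffine] using
      (hasDerivAt_expAffine 0 (b * k * k) k 0).continuousAt.tendsto.mono_left nhdsWithin_le_nhds
  exact hcont.congr' (eventuallyEq_nhdsWithin_of_eqOn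
    (eqOn_deriv_expAffine hs (eqOn_deriv_expAffine hs h))).symm

theorem hasDerivAt_zero_of_eqOn_expAffine (hneg : EqOn f (expAffine a b k) (Iic 0))
    (hpos : EqOn f (expAffine c d l) (Ici 0)) (hslope : b * k = d * l) :
    HasDerivAt f (b * k) 0 := by
  have hl : HasDerivWithinAt f (b * k) (Iic 0) 0 := by
    simpa using ((hasDerivAt_expAffine a b k 0).hasDerivWithinAt).congr hneg
      (hneg self_mem_Iic)
  have hr : HasDerivWithinAt f (b * k) (Ici 0) 0 := by
    simpa [hslope] using ((hasDerivAt_expAffine c d l 0).hasDerivWithinAt).congr hpos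
      (hpos self_mem_Ici)
  simpa [Iic_union_Ici] using hl.union hr

theorem continuousAt_deriv_zero_of_eqOn_expAffine
    (hneg : EqOn f (expAffine a b k) (Iic 0))
    (hpos : EqOn f (expAffine c d l) (Ici 0)) (hslope : b * k = d * l) :
    ContinuousAt (deriv f) 0 := by
  have h0 := (hasDerivAt_zero_of_eqOn_expAffine hneg hpos hslope).deriv
  have hl : EqOn (deriv f) (expAffine 0 (b * k) k) (Iic 0) := by
    intro x hx
    rcases (mem_Iic.mp hx).lt_or_eq with hx | rfl
    · exact eqOn_deriv_expAffine isOpen_Iio (hneg.mono Iio_subset_Iic_self) hx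
    · simp [h0, expAffine]
  have hr : EqOn (deriv f) (expAffine 0 (d * l) l) (Ici 0) := by
    intro x hx
    rcases (mem_Ici.mp hx).lt_or_eq with hx | rfl
    · exact eqOn_deriv_expAffine isOpen_Ioi (hpos.mono Ioi_subset_Ici_self) hx
    · simp [h0, hslope, expAffine]
  rw [continuousAt_iff_continuous_left_right]
  exact ⟨(hasDerivAt_expAffine _ _ _ _).continuousAt.continuousWithinAt.congr hl
      (hl self_mem_Iic),
    (hasDerivAt_expAffine _ _ _ _).continuousAt.continuousWithinAt.congr hr (hr self_mem_Ici)⟩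

end ExpAffine

section TravelingWave

variable {θi Le : ℝ}

noncomputable def phi0AtZero (θi Le : ℝ) : ℝ :=
  θi / ((θi / (1 - θi) * (1 + θi / (Le * (1 - θi)))) * (1 - θi))

theorem Theta0_eqOn_Iic (θi Le : ℝ) :
    EqOn (Theta0 θi Le) (expAffine 1 (-(1 - θi)) (θi / (1 - θi))) (Iic 0) := by
  intro x hx
  rcases (mem_Iic.mp hx).lt_or_eq with hx | rfl
  · simp only [Theta0, expAffine, if_pos hx]
    ring
  · simp [Theta0, expAffine]

theorem Theta0_eqOn_Ici (θi Le : ℝ) :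
    EqOn (Theta0 θi Le) (expAffine 0 θi (-1)) (Ici 0) := by
  intro x hx
  simp [Theta0, expAffine, not_lt.mpr (mem_Ici.mp hx)]

theorem Phi0_eqOn_Iic (θi Le : ℝ) :
    EqOn (Phi0 θi Le) (expAffine 0 (phi0AtZero θi Le) (θi / (1 - θi))) (Iic 0) := by
  intro x hx
  rcases (mem_Iic.mp hx).lt_or_eq with hx | rfl
  · simp only [Phi0, expAffine, phi0AtZero, if_pos hx, zero_add]
  · simp [Phi0, expAffine, phi0AtZero]

theorem Phi0_eqOn_Ici (θi Le : ℝ) :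
    EqOn (Phi0 θi Le) (expAffine 1 (phi0AtZero θi Le - 1) (-Le)) (Ici 0) := by
  intro x hx
  simp only [Phi0, expAffine, phi0AtZero, if_neg (not_lt.mpr (mem_Ici.mp hx))]

theorem Theta0_slope_eq (hθ : θi ≠ 1) : -(1 - θi) * (θi / (1 - θi)) = θi * (-1) := by
  field_simp [sub_ne_zero.mpr hθ.symm]

theorem phi0AtZero_mul_add (hθ : θi ∈ Ioo 0 1) (hLe : 0 < Le) :
    phi0AtZero θi Le * (θi / (1 - θi) + Le) = Le := by
  obtain ⟨h0, h1⟩ := hθ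
  have : 0 < 1 - θi := sub_pos.mpr h1
  unfold phi0AtZero
  field_simp
  ring

theorem Phi0_slope_eq (hθ : θi ∈ Ioo 0 1) (hLe : 0 < Le) :
    phi0AtZero θi Le * (θi / (1 - θi)) = (phi0AtZero θi Le - 1) * (-Le) := by
  linear_combination phi0AtZero_mul_add hθ hLe

theorem wave_ode_of_neg (hθ : θi ∈ Ioo 0 1) (hLe : 0 < Le) {ξ : ℝ} (hξ : ξ < 0) :
    deriv (deriv (deriv (Theta0 θi Le))) ξ + deriv (deriv (Theta0 θi Le)) ξ +
        (θi / (1 - θi) * (1 + θi / (Le * (1 - θi)))) * deriv (Phi0 θi Le) ξ = 0 ∧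
      Le⁻¹ * deriv (deriv (deriv (Phi0 θi Le))) ξ + deriv (deriv (Phi0 θi Le)) ξ -
        (θi / (1 - θi) * (1 + θi / (Le * (1 - θi)))) * deriv (Phi0 θi Le) ξ = 0 := by
  have hu' := eqOn_deriv_expAffine isOpen_Iio <| eqOn_deriv_expAffine isOpen_Iio <|
    (Theta0_eqOn_Iic θi Le).mono Iio_subset_Iic_self
  have hv := eqOn_deriv_expAffine isOpen_Iio <| (Phi0_eqOn_Iic θi Le).mono Iio_subset_Iic_self
  have hv' := eqOn_deriv_expAffine isOpen_Iio hv
  rw [eqOn_deriv_expAffine isOpen_Iio hu' hξ, hu' hξ, eqOn_deriv_expAffine isOpen_Iio hv' hξ,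
    hv' hξ, hv hξ]
  obtain ⟨h0, h1⟩ := hθ
  have h1' : 0 < 1 - θi := sub_pos.mpr h1
  have hA : 0 < Le * (1 - θi) := mul_pos hLe h1'
  simp only [expAffine, phi0AtZero, zero_add]
  constructor <;> field_simp <;> ring

theorem wave_ode_of_pos (hLe : Le ≠ 0) {ξ : ℝ} (hξ : 0 < ξ) :
    deriv (deriv (deriv (Theta0 θi Le))) ξ + deriv (deriv (Theta0 θi Le)) ξ = 0 ∧
      Le⁻¹ * deriv (deriv (deriv (Phi0 θi Le))) ξ + deriv (deriv (Phi0 θi Le)) ξ = 0 := by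
  have hu' := eqOn_deriv_expAffine isOpen_Ioi <| eqOn_deriv_expAffine isOpen_Ioi <|
    (Theta0_eqOn_Ici θi Le).mono Ioi_subset_Ici_self
  have hv' := eqOn_deriv_expAffine isOpen_Ioi <| eqOn_deriv_expAffine isOpen_Ioi <|
    (Phi0_eqOn_Ici θi Le).mono Ioi_subset_Ici_self
  rw [eqOn_deriv_expAffine isOpen_Ioi hu' hξ, hu' hξ, eqOn_deriv_expAffine isOpen_Ioi hv' hξ,
    hv' hξ]
  simp only [expAffine, zero_add]
  constructor
  · ring
  · linear_combination
      (-(phi0AtZero θi Le - 1) * Le ^ 2 * exp (-Le * ξ)) * inv_mul_cancel₀ hLe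

end TravelingWave

/-- the pair (u,v)=((Θ⁰)',(Φ⁰)') is an eigenfunction of the
linearized operator with eigenvalue 0: continuity at 0, the ODEs on (−∞,0) and
(0,∞) with A = (Θᵢ/(1−Θᵢ))(1+Θᵢ/(Le(1−Θᵢ))), the transmission conditions at 0,
and finiteness of the four weighted suprema. -/
theorem derivative_of_wave_is_eigenfunction (θi Le : ℝ)
    (hθ : θi ∈ Set.Ioo (0:ℝ) 1) (hLe : 1 < Le) :
    ContinuousAt (deriv (Theta0 θi Le)) 0 ∧
    ContinuousAt (deriv (Phi0 θi Le)) 0 ∧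
    (∀ ξ < (0:ℝ),
      deriv (deriv (deriv (Theta0 θi Le))) ξ + deriv (deriv (Theta0 θi Le)) ξ +
        (θi / (1 - θi) * (1 + θi / (Le * (1 - θi)))) * deriv (Phi0 θi Le) ξ = 0 ∧
      Le⁻¹ * deriv (deriv (deriv (Phi0 θi Le))) ξ + deriv (deriv (Phi0 θi Le)) ξ -
        (θi / (1 - θi) * (1 + θi / (Le * (1 - θi)))) * deriv (Phi0 θi Le) ξ = 0) ∧
    (∀ ξ > (0:ℝ),
      deriv (deriv (deriv (Theta0 θi Le))) ξ + deriv (deriv (Theta0 θi Le)) ξ = 0 ∧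
      Le⁻¹ * deriv (deriv (deriv (Phi0 θi Le))) ξ + deriv (deriv (Phi0 θi Le)) ξ = 0) ∧
    (∃ up um : ℝ,
      Tendsto (deriv (deriv (Theta0 θi Le))) (𝓝[>] 0) (𝓝 up) ∧
      Tendsto (deriv (deriv (Theta0 θi Le))) (𝓝[<] 0) (𝓝 um) ∧
      up - um = -(deriv (Theta0 θi Le) 0) / (1 - θi)) ∧
    (∃ vp vm : ℝ,
      Tendsto (deriv (deriv (Phi0 θi Le))) (𝓝[>] 0) (𝓝 vp) ∧
      Tendsto (deriv (deriv (Phi0 θi Le))) (𝓝[<] 0) (𝓝 vm) ∧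
      vp - vm = Le * deriv (Theta0 θi Le) 0 / (1 - θi)) ∧
    (∃ C : ℝ, ∀ ξ < (0:ℝ), Real.exp (ξ / 2) * |deriv (Theta0 θi Le) ξ| ≤ C) ∧
    (∃ C : ℝ, ∀ ξ > (0:ℝ), Real.exp (ξ / 2) * |deriv (Theta0 θi Le) ξ| ≤ C) ∧
    (∃ C : ℝ, ∀ ξ < (0:ℝ), Real.exp (ξ / 2) * |deriv (Phi0 θi Le) ξ| ≤ C) ∧
    (∃ C : ℝ, ∀ ξ > (0:ℝ), Real.exp (Le * ξ / 2) * |deriv (Phi0 θi Le) ξ| ≤ C) := by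
  have hLe0 : 0 < Le := zero_lt_one.trans hLe
  have hm : 0 < θi / (1 - θi) := div_pos hθ.1 (sub_pos.mpr hθ.2)
  have hΘslope := Theta0_slope_eq hθ.2.ne
  have hΦslope := Phi0_slope_eq hθ hLe0
  have hu0 : deriv (Theta0 θi Le) 0 = -θi := by
    rw [(hasDerivAt_zero_of_eqOn_expAffine (Theta0_eqOn_Iic θi Le) (Theta0_eqOn_Ici θi Le)
      hΘslope).deriv, hΘslope, mul_neg_one]
  have hΘneg := (Theta0_eqOn_Iic θi Le).mono Iio_subset_Iic_self
  have hΘpos := (Theta0_eqOn_Ici θi Le).mono Ioi_subset_Ici_self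
  have hΦneg := (Phi0_eqOn_Iic θi Le).mono Iio_subset_Iic_self
  have hΦpos := (Phi0_eqOn_Ici θi Le).mono Ioi_subset_Ici_self
  refine ⟨continuousAt_deriv_zero_of_eqOn_expAffine (Theta0_eqOn_Iic θi Le)
      (Theta0_eqOn_Ici θi Le) hΘslope,
    continuousAt_deriv_zero_of_eqOn_expAffine (Phi0_eqOn_Iic θi Le)
      (Phi0_eqOn_Ici θi Le) hΦslope,
    fun ξ hξ => wave_ode_of_neg hθ hLe0 hξ, fun ξ hξ => wave_ode_of_pos hLe0.ne' hξ,
    ⟨_, _, tendsto_deriv_deriv_of_eqOn_expAffine isOpen_Ioi hΘpos,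
      tendsto_deriv_deriv_of_eqOn_expAffine isOpen_Iio hΘneg, ?_⟩,
    ⟨_, _, tendsto_deriv_deriv_of_eqOn_expAffine isOpen_Ioi hΦpos,
      tendsto_deriv_deriv_of_eqOn_expAffine isOpen_Iio hΦneg, ?_⟩,
    exists_bound_exp_mul_abs_deriv isOpen_Iio hΘneg fun ξ (hξ : ξ < 0) => by nlinarith,
    exists_bound_exp_mul_abs_deriv isOpen_Ioi hΘpos fun ξ (hξ : 0 < ξ) => by nlinarith,
    exists_bound_exp_mul_abs_deriv isOpen_Iio hΦneg fun ξ (hξ : ξ < 0) => by nlinarith,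
    exists_bound_exp_mul_abs_deriv isOpen_Ioi hΦpos fun ξ (hξ : 0 < ξ) => by nlinarith⟩
  · rw [hu0]
    field_simp [(sub_pos.mpr hθ.2).ne']
    ring
  · rw [hu0]
    linear_combination (Le - θi / (1 - θi)) * phi0AtZero_mul_add hθ hLe0
end

section
/- Let Le>1 and A>0, and set λ*₊ = (−A·Le + i√(A·Le(Le−1)))/(Le−1) and λ*₋ = (−A·Le − i√(A·Le(Le−1)))/(Le−1). Then: (i) λ*₊ and λ*₋ are exactly the two roots of the quadratic (Le−1)²λ² + 2(Le−1)·Le·A·λ + Le·A·(Le·A+Le−1) = 0; (ii) both satisfy k₁(λ)=k₃(λ), i.e. √(Le²+4Le(A+λ*₊)) = √(1+4λ*₊) + Le − 1 and likewise for λ*₋ (with principal complex square roots); (iii) Re λ*₊ = Re λ*₋ = −A·Le/(Le−1) < 0. -/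
/-!
The roots are `λ = (−A·Le + i t)/(Le−1)` with `t = ±√(A·Le·(Le−1))`. The quadratic factors as
`((Le−1)λ + A·Le)² + t²`, whence its roots. With `u = 2it/(Le−1)` purely imaginary,
`1 + 4λ = (1 + u)²` and `Le² + 4Le(A + λ) = (Le + u)²`; both bases have positive real part,
so they are the principal square roots, and they differ by `Le − 1`.
-/

open Complex

/-- Principal branch of the complex square root. -/
noncomputable def csqrt (z : ℂ) : ℂ := z ^ (1/2 : ℂ)

lemma csqrt_sq {w : ℂ} (hw : 0 < w.re) : csqrt (w ^ 2) = w := by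
  simpa [csqrt, one_div] using sq_cpow_two_inv hw

lemma ofReal_sub_one (x : ℝ) : (x : ℂ) - 1 = ((x - 1 : ℝ) : ℂ) := by
  push_cast; ring

lemma ofReal_sub_one_ne_zero {x : ℝ} (hx : x ≠ 1) : (x : ℂ) - 1 ≠ 0 := by
  rw [ofReal_sub_one]; exact_mod_cast sub_ne_zero.mpr hx

noncomputable def criticalRoot (Le A t : ℝ) : ℂ := (-(A * Le) + I * t) / ((Le : ℂ) - 1)

section

variable {Le A : ℝ}

lemma criticalRoot_re (t : ℝ) : (criticalRoot Le A t).re = -(A * Le) / (Le - 1) := by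
  rw [criticalRoot, ofReal_sub_one, div_ofReal_re]; simp

lemma criticalRoot_im (t : ℝ) : (criticalRoot Le A t).im = t / (Le - 1) := by
  rw [criticalRoot, ofReal_sub_one, div_ofReal_im]; simp

lemma criticalRoot_injective (hLe : Le ≠ 1) : Function.Injective (criticalRoot Le A) := by
  intro t t' h
  have him := congrArg im h
  rwa [criticalRoot_im, criticalRoot_im, div_left_inj' (sub_ne_zero.mpr hLe)] at him

lemma quadratic_eq_zero_iff_eq_criticalRoot (hLe : Le ≠ 1) {s : ℝ}
    (hs : s ^ 2 = A * Le * (Le - 1)) (l : ℂ) :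
    ((Le : ℂ) - 1) ^ 2 * l ^ 2 + 2 * ((Le : ℂ) - 1) * Le * A * l +
        (Le : ℂ) * A * ((Le : ℂ) * A + Le - 1) = 0 ↔
      l = criticalRoot Le A s ∨ l = criticalRoot Le A (-s) := by
  have hd := ofReal_sub_one_ne_zero hLe
  have hs' : (s : ℂ) ^ 2 = A * Le * (Le - 1) := by exact_mod_cast hs
  have hfactor : ((Le : ℂ) - 1) ^ 2 * l ^ 2 + 2 * ((Le : ℂ) - 1) * Le * A * l +
      (Le : ℂ) * A * ((Le : ℂ) * A + Le - 1) =
      (((Le : ℂ) - 1) * l - (-(A * Le) + I * s)) *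
        (((Le : ℂ) - 1) * l - (-(A * Le) + I * (-s : ℝ))) := by
    push_cast
    linear_combination -hs' + (s : ℂ) ^ 2 * I_sq
  rw [hfactor, mul_eq_zero, sub_eq_zero, sub_eq_zero, criticalRoot, criticalRoot,
    eq_div_iff hd, eq_div_iff hd, mul_comm l]

variable {t : ℝ} (hLe : Le ≠ 1) (ht : t ^ 2 = A * Le * (Le - 1))
include hLe ht

lemma one_add_four_mul_criticalRoot :
    1 + 4 * criticalRoot Le A t = (1 + 2 * I * t / ((Le : ℂ) - 1)) ^ 2 := by
  have hd := ofReal_sub_one_ne_zero hLe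
  have ht' : (t : ℂ) ^ 2 = A * Le * (Le - 1) := by exact_mod_cast ht
  rw [criticalRoot]
  field_simp
  linear_combination 4 * ht' - 4 * (t : ℂ) ^ 2 * I_sq

lemma sq_add_four_mul_add_criticalRoot :
    (Le : ℂ) ^ 2 + 4 * Le * (A + criticalRoot Le A t) =
      (Le + 2 * I * t / ((Le : ℂ) - 1)) ^ 2 := by
  have hd := ofReal_sub_one_ne_zero hLe
  have ht' : (t : ℂ) ^ 2 = A * Le * (Le - 1) := by exact_mod_cast ht
  rw [criticalRoot]
  field_simp
  linear_combination 4 * ht' - 4 * (t : ℂ) ^ 2 * I_sq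

lemma csqrt_sq_add_four_mul_add_criticalRoot (hLe₀ : 0 < Le) :
    csqrt ((Le : ℂ) ^ 2 + 4 * Le * (A + criticalRoot Le A t)) =
      csqrt (1 + 4 * criticalRoot Le A t) + Le - 1 := by
  have hre : (2 * I * t / ((Le : ℂ) - 1)).re = 0 := by
    rw [ofReal_sub_one, div_ofReal_re]; simp
  rw [sq_add_four_mul_add_criticalRoot hLe ht, one_add_four_mul_criticalRoot hLe ht,
    csqrt_sq (by simpa [hre]), csqrt_sq (by simp [hre])]
  ring

end

/-- the two complex numbers λ*₊, λ*₋ are exactly the roots of the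
quadratic (Le−1)²λ² + 2(Le−1)LeAλ + LeA(LeA+Le−1) = 0, they satisfy
k₁(λ)=k₃(λ), i.e. √(Le²+4Le(A+λ)) = √(1+4λ) + Le − 1, and their common real
part −A·Le/(Le−1) is negative. -/
theorem roots_k1_eq_k3 (Le A : ℝ) (hLe : 1 < Le) (hA : 0 < A) :
    (fun lp lm : ℂ =>
      lp ≠ lm ∧
      (∀ l : ℂ,
        ((Le : ℂ) - 1) ^ 2 * l ^ 2 + 2 * ((Le : ℂ) - 1) * Le * A * l +
          (Le : ℂ) * A * ((Le : ℂ) * A + Le - 1) = 0 ↔ l = lp ∨ l = lm) ∧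
      csqrt ((Le : ℂ) ^ 2 + 4 * Le * ((A : ℂ) + lp)) = csqrt (1 + 4 * lp) + Le - 1 ∧
      csqrt ((Le : ℂ) ^ 2 + 4 * Le * ((A : ℂ) + lm)) = csqrt (1 + 4 * lm) + Le - 1 ∧
      lp.re = -(A * Le) / (Le - 1) ∧
      lm.re = -(A * Le) / (Le - 1) ∧
      -(A * Le) / (Le - 1) < 0)
    ((-(A * Le) + Complex.I * Real.sqrt (A * Le * (Le - 1))) / ((Le : ℂ) - 1))
    ((-(A * Le) - Complex.I * Real.sqrt (A * Le * (Le - 1))) / ((Le : ℂ) - 1)) := by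
  have hLe₁ : Le ≠ 1 := hLe.ne'
  have hLe₀ : 0 < Le := zero_lt_one.trans hLe
  have hpos : 0 < A * Le * (Le - 1) := by have := sub_pos.mpr hLe; positivity
  set s := Real.sqrt (A * Le * (Le - 1))
  have hs : s ^ 2 = A * Le * (Le - 1) := Real.sq_sqrt hpos.le
  have hs' : (-s) ^ 2 = A * Le * (Le - 1) := by rw [neg_sq, hs]
  have hlm : (-(A * Le) - I * s) / ((Le : ℂ) - 1) = criticalRoot Le A (-s) := by
    rw [criticalRoot]; push_cast; ring
  beta_reduce
  rw [hlm]
  refine ⟨?_, quadratic_eq_zero_iff_eq_criticalRoot hLe₁ hs,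
    csqrt_sq_add_four_mul_add_criticalRoot hLe₁ hs hLe₀,
    csqrt_sq_add_four_mul_add_criticalRoot hLe₁ hs' hLe₀,
    criticalRoot_re s, criticalRoot_re (-s), ?_⟩
  · have hs_pos : 0 < s := Real.sqrt_pos.mpr hpos
    exact (criticalRoot_injective hLe₁).ne (by linarith : s ≠ -s)
  · exact div_neg_of_neg_of_pos (neg_neg_of_pos (mul_pos hA hLe₀)) (sub_pos.mpr hLe)
end

section
/- Let Le>1 and A>0, and set λ* = (−A·Le + i√(A·Le(Le−1)))/(Le−1). With a = (1−1/Le)², b = 1/Le and c = (2A+1)/2 + (8A−5)/(4Le) + (1+A)/Le² − 1/(4Le³), one has a·Re λ* + b·(Im λ*)² + c > 0; that is, λ* (and its complex conjugate) does not belong to the parabolic region 𝒫 = {λ∈ℂ : a·Re λ + b·(Im λ)² + c ≤ 0}. -/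
/-!
Since `Le - 1` is real, `Re λ* = -A·Le/(Le-1)` and `(Im λ*)² = A·Le/(Le-1)`. Substituting, the
parabola's defining expression becomes `P(Le, A) / (4·Le³·(Le-1))` with the quartic
`P = 2Le⁴ + (16A-7)Le³ + (9-8A)Le² - (4A+5)Le + 1 = 4A·Le·(4Le²-2Le-1) + (Le-1)³(2Le-1)`,
and both summands are positive for `Le > 1`.
-/

open Complex

theorem re_div_ofReal_sub_one (z : ℂ) (d : ℝ) : (z / ((d : ℂ) - 1)).re = z.re / (d - 1) := by
  rw [← ofReal_one, ← ofReal_sub, div_ofReal_re]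

theorem im_div_ofReal_sub_one (z : ℂ) (d : ℝ) : (z / ((d : ℂ) - 1)).im = z.im / (d - 1) := by
  rw [← ofReal_one, ← ofReal_sub, div_ofReal_im]

theorem parabola_quartic_pos {Le A : ℝ} (hLe : 1 < Le) (hA : 0 ≤ A) :
    0 < 2 * Le ^ 4 + (16 * A - 7) * Le ^ 3 + (9 - 8 * A) * Le ^ 2 - (4 * A + 5) * Le + 1 := by
  have hquad : 0 < 4 * Le ^ 2 - 2 * Le - 1 := by nlinarith
  have hcube : 0 < (Le - 1) ^ 3 * (2 * Le - 1) :=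
    mul_pos (pow_pos (by linarith) 3) (by linarith)
  have hA_term : 0 ≤ 4 * A * Le * (4 * Le ^ 2 - 2 * Le - 1) :=
    mul_nonneg (by positivity) hquad.le
  linear_combination hA_term + hcube

theorem parabola_form_eq {Le A : ℝ} (hLe : Le ≠ 0) (hLe1 : Le - 1 ≠ 0) :
    (1 - 1 / Le) ^ 2 * (-(A * Le) / (Le - 1)) + 1 / Le * (A * Le / (Le - 1)) +
        ((2 * A + 1) / 2 + (8 * A - 5) / (4 * Le) + (1 + A) / Le ^ 2 - 1 / (4 * Le ^ 3)) =
      (2 * Le ^ 4 + (16 * A - 7) * Le ^ 3 + (9 - 8 * A) * Le ^ 2 - (4 * A + 5) * Le + 1) /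
        (4 * Le ^ 3 * (Le - 1)) := by
  field_simp
  ring

/-- the point λ* = (−A·Le + i√(A·Le(Le−1)))/(Le−1) (and hence its
conjugate) lies outside the parabolic region
𝒫 = {λ : a·Re λ + b·(Im λ)² + c ≤ 0}. -/
theorem lambda_star_not_in_parabola (Le A : ℝ) (hLe : 1 < Le) (hA : 0 < A) :
    (fun (lstar : ℂ) (a b c : ℝ) =>
      a * lstar.re + b * lstar.im ^ 2 + c > 0)
    ((-(A * Le) + Complex.I * Real.sqrt (A * Le * (Le - 1))) / ((Le : ℂ) - 1))
    ((1 - 1 / Le) ^ 2)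
    (1 / Le)
    ((2 * A + 1) / 2 + (8 * A - 5) / (4 * Le) + (1 + A) / Le ^ 2 - 1 / (4 * Le ^ 3)) := by
  have hLe1 : 0 < Le - 1 := by linarith
  have hLe0 : 0 < Le := by linarith
  have him_sq : (Real.sqrt (A * Le * (Le - 1)) / (Le - 1)) ^ 2 = A * Le / (Le - 1) := by
    rw [div_pow, Real.sq_sqrt (by positivity)]
    field_simp
  simp only [re_div_ofReal_sub_one, im_div_ofReal_sub_one, add_re, add_im, neg_re, neg_im,
    mul_re, mul_im, I_re, I_im, ofReal_re, ofReal_im, mul_zero, zero_mul, one_mul, sub_zero,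
    add_zero, zero_add, neg_zero]
  rw [him_sq, parabola_form_eq hLe0.ne' hLe1.ne']
  exact div_pos (parabola_quartic_pos hLe hA.le) (by positivity)
end

section
/- Let Le>1 and A>0. There is no λ∈ℂ such that √(1+4λ) + √(Le²+4Le(A+λ)) = Le−1, where √· denotes the principal branch of the complex square root. Equivalently, k₂(λ) ≠ k₃(λ) for every λ∈ℂ. -/
/-!
Write `a = √(1+4λ)` and `b = √(Le²+4Le(A+λ))`. Eliminating `λ` between `a² = 1+4λ` and
`b² = Le²+4Le(A+λ)`, and then `b` through `a + b = Le - 1`, leaves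
`(Le - 1)(a + 1)² = -4·Le·A`. So `(a + 1)²` is a negative real number, which forces
`Re (a + 1) = 0`, i.e. `Re a = -1`; but a principal square root has nonnegative real part.
-/

open Complex

lemma csqrt_sq_s7 (z : ℂ) : csqrt z ^ 2 = z := by
  rw [csqrt, one_div]
  exact cpow_ofNat_inv_pow z 2

lemma re_csqrt_nonneg (z : ℂ) : 0 ≤ (csqrt z).re := by
  rw [csqrt, one_div, cpow_inv_two_re]
  exact Real.sqrt_nonneg _

lemma re_eq_zero_of_mul_sq_eq_neg {z : ℂ} {p q : ℝ} (hp : 0 < p) (hq : 0 < q)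
    (h : p * z ^ 2 = -q) : z.re = 0 := by
  have hre : p * (z.re ^ 2 - z.im ^ 2) = -q := by
    simpa [sq] using congrArg re h
  have him : z.re * z.im = 0 := by
    have := congrArg im h
    simp only [mul_im, ofReal_re, ofReal_im, zero_mul, add_zero, neg_im, sq, mul_re, neg_zero] at this
    linarith [(mul_eq_zero.1 this).resolve_left hp.ne']
  rcases mul_eq_zero.1 him with h0 | h0
  · exact h0
  · rw [h0] at hre
    nlinarith [sq_nonneg z.re]

/-- for Le>1, A>0 there is no λ∈ℂ with
√(1+4λ) + √(Le²+4Le(A+λ)) = Le−1, i.e. k₂(λ) ≠ k₃(λ) for all λ. -/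
theorem no_solution_k2_eq_k3 (Le A : ℝ) (hLe : 1 < Le) (hA : 0 < A) :
    ¬ ∃ l : ℂ,
      csqrt (1 + 4 * l) + csqrt ((Le : ℂ) ^ 2 + 4 * Le * ((A : ℂ) + l)) =
        (Le : ℂ) - 1 := by
  rintro ⟨l, hl⟩
  set a := csqrt (1 + 4 * l)
  set b := csqrt ((Le : ℂ) ^ 2 + 4 * Le * ((A : ℂ) + l))
  have hsq : ((Le - 1 : ℝ) : ℂ) * (a + 1) ^ 2 = -((4 * Le * A : ℝ) : ℂ) := by
    push_cast
    linear_combination (b + Le - 1 - a) * hl + Le * csqrt_sq_s7 (1 + 4 * l) -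
      csqrt_sq_s7 ((Le : ℂ) ^ 2 + 4 * Le * ((A : ℂ) + l))
  have hre : (a + 1).re = 0 :=
    re_eq_zero_of_mul_sq_eq_neg (by linarith) (by positivity) hsq
  have ha : 0 ≤ a.re := re_csqrt_nonneg _
  simp only [add_re, one_re] at hre
  linarith
end

section
/- The polynomial q(θ) = 1920θ⁶ − 11600θ⁵ + 19164θ⁴ − 12038θ³ + 2174θ² + 251θ + 8 is strictly positive for every θ ∈ (0,1/2) and strictly negative for every θ ∈ ((4+√22)/12, 1). -/
/-!
Write `q` in the Bernstein basis of an interval `[α, β]`, i.e. as a homogeneous sextic in `θ - α`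
and `β - θ`. For `[0, 1/2]` all seven coefficients are positive, for `[7/10, 1]` all are negative;
and `7/10 < (4 + √22)/12` because `4.4 < √22`.
-/

noncomputable def q (θ : ℝ) : ℝ :=
  1920 * θ ^ 6 - 11600 * θ ^ 5 + 19164 * θ ^ 4 - 12038 * θ ^ 3 + 2174 * θ ^ 2 + 251 * θ + 8

lemma q_eq_bernstein_zero_half (θ : ℝ) :
    q θ = 2400 * θ ^ 6 + 11784 * θ ^ 5 * (1 - 2 * θ) + 21112 * θ ^ 4 * (1 - 2 * θ) ^ 2 +
      16674 * θ ^ 3 * (1 - 2 * θ) ^ 3 + 5164 * θ ^ 2 * (1 - 2 * θ) ^ 4 +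
      347 * θ * (1 - 2 * θ) ^ 5 + 8 * (1 - 2 * θ) ^ 6 := by
  unfold q; ring

lemma q_eq_bernstein_seven_tenths_one (θ : ℝ) :
    -729 * q θ = 121000000 * (θ - 7 / 10) ^ 6 + 324300000 * (θ - 7 / 10) ^ 5 * (1 - θ) +
      360540000 * (θ - 7 / 10) ^ 4 * (1 - θ) ^ 2 + 268646000 * (θ - 7 / 10) ^ 3 * (1 - θ) ^ 3 +
      151989600 * (θ - 7 / 10) ^ 2 * (1 - θ) ^ 4 + 44506800 * (θ - 7 / 10) * (1 - θ) ^ 5 +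
      2523520 * (1 - θ) ^ 6 := by
  unfold q; ring

lemma q_pos {θ : ℝ} (h₀ : 0 < θ) (h₁ : θ < 1 / 2) : 0 < q θ := by
  have h₂ : 0 < 1 - 2 * θ := by linarith
  rw [q_eq_bernstein_zero_half]
  positivity

lemma q_neg {θ : ℝ} (h₀ : 7 / 10 < θ) (h₁ : θ < 1) : q θ < 0 := by
  have ha : 0 < θ - 7 / 10 := by linarith
  have hc : 0 < 1 - θ := by linarith
  have : 0 < -729 * q θ := by
    rw [q_eq_bernstein_seven_tenths_one]
    positivity
  linarith

lemma seven_tenths_lt_threshold : 7 / 10 < (4 + Real.sqrt 22) / 12 := by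
  have : 4.4 < Real.sqrt 22 := Real.lt_sqrt (by norm_num) |>.mpr (by norm_num)
  linarith

/-- the polynomial
q(θ) = 1920θ⁶ − 11600θ⁵ + 19164θ⁴ − 12038θ³ + 2174θ² + 251θ + 8
is strictly positive on (0,1/2) and strictly negative on ((4+√22)/12, 1). -/
theorem q_sign (θ : ℝ) :
    (0 < θ → θ < 1 / 2 →
      0 < 1920 * θ ^ 6 - 11600 * θ ^ 5 + 19164 * θ ^ 4 - 12038 * θ ^ 3 +
        2174 * θ ^ 2 + 251 * θ + 8) ∧
    ((4 + Real.sqrt 22) / 12 < θ → θ < 1 →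
      1920 * θ ^ 6 - 11600 * θ ^ 5 + 19164 * θ ^ 4 - 12038 * θ ^ 3 +
        2174 * θ ^ 2 + 251 * θ + 8 < 0) :=
  ⟨q_pos, fun h₀ h₁ => q_neg (seven_tenths_lt_threshold.trans h₀) h₁⟩
end

section
/- For every m ∈ (2,8), the complex numbers λ₁(m) = (m²−6m)/8 + i·(m−2)√(8m−m²)/8 and its complex conjugate λ₂(m) = (m²−6m)/8 − i·(m−2)√(8m−m²)/8 are roots of the limit dispersion relation: D₀(λ₁(m);m)=0 and D₀(λ₂(m);m)=0. -/
/-!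
Put `s = √(1 + 4λ)`, so `λ = (s² - 1) / 4`; the first factor of `D₀` becomes `2m + (s + 1)² / 2` and
`D₀ = m - (4m + (s + 1)²)(1 + m - s) / (4(1 + m))`. For `λ₁,₂` the square root is
`s = ((m - 2) ± i r) / 2` with `r = √(8m - m²)`: it is the principal one because `m > 2`. Using
`r² = 8m - m²`, `4m + (s + 1)² = (m/2)(m + 4 ± i r)` and `1 + m - s = (m + 4 ∓ i r)/2`, whose
product is `(m/4)((m + 4)² + r²) = 4m(1 + m)`.
-/

open Complex

/-- The limit dispersion relation D₀(λ;m). -/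
noncomputable def dispersion0 (m : ℝ) (l : ℂ) : ℂ :=
  -(1/2) * (2 * ((m : ℂ) + l) + 1 + csqrt (1 + 4 * l)) *
    (1 - csqrt (1 + 4 * l) / (1 + (m : ℂ))) + (m : ℂ)

lemma csqrt_sq_of_re_pos {s : ℂ} (hs : 0 < s.re) : csqrt (s ^ 2) = s := by
  rw [csqrt, one_div, sq_cpow_two_inv hs]

lemma dispersion0_sq_sub_one_div_four (m : ℝ) {s : ℂ} (hs : 0 < s.re) (hm : (1 + m : ℂ) ≠ 0) :
    dispersion0 m ((s ^ 2 - 1) / 4) =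
      m - (4 * m + (s + 1) ^ 2) * (1 + m - s) / (4 * (1 + m)) := by
  rw [dispersion0, show 1 + 4 * ((s ^ 2 - 1) / 4) = s ^ 2 by ring, csqrt_sq_of_re_pos hs]
  field_simp
  ring

lemma dispersion0_eq_zero_of_sq_eq (m r : ℝ) (hm : 2 < m) (hr : r ^ 2 = 8 * m - m ^ 2) :
    dispersion0 m (((m ^ 2 - 6 * m) / 8 : ℝ) + I * ((m - 2) * r / 8 : ℝ)) = 0 := by
  have hrC : (r : ℂ) ^ 2 = 8 * m - m ^ 2 := by exact_mod_cast hr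
  set s : ℂ := ((m - 2) + r * I) / 2
  have hs : 0 < s.re := by simpa [s] using hm
  have hm1 : (1 + m : ℂ) ≠ 0 := by exact_mod_cast (by linarith : 1 + m ≠ 0)
  have hl : (((m ^ 2 - 6 * m) / 8 : ℝ) + I * ((m - 2) * r / 8 : ℝ) : ℂ) = (s ^ 2 - 1) / 4 := by
    push_cast
    linear_combination (-(r ^ 2) / 16 : ℂ) * I_sq + (1 / 16 : ℂ) * hrC
  have hfirst : 4 * m + (s + 1) ^ 2 = m / 2 * (m + 4 + r * I) := by
    linear_combination (r ^ 2 / 4 : ℂ) * I_sq - (1 / 4 : ℂ) * hrC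
  have hsecond : 1 + m - s = (m + 4 - r * I) / 2 := by ring
  rw [hl, dispersion0_sq_sub_one_div_four m hs hm1, hfirst, hsecond, sub_eq_zero,
    eq_div_iff (by simpa)]
  linear_combination (m * r ^ 2 / 4 : ℂ) * I_sq - (m / 4 : ℂ) * hrC

/-- for m ∈ (2,8), λ₁(m) = (m²−6m)/8 + i(m−2)√(8m−m²)/8 and its
conjugate are roots of the limit dispersion relation. -/
theorem limit_dispersion_roots (m : ℝ) (hm2 : 2 < m) (hm8 : m < 8) :
    dispersion0 m (((m ^ 2 - 6 * m) / 8 : ℝ) +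
      Complex.I * ((m - 2) * Real.sqrt (8 * m - m ^ 2) / 8 : ℝ)) = 0 ∧
    dispersion0 m (((m ^ 2 - 6 * m) / 8 : ℝ) -
      Complex.I * ((m - 2) * Real.sqrt (8 * m - m ^ 2) / 8 : ℝ)) = 0 := by
  have hr : Real.sqrt (8 * m - m ^ 2) ^ 2 = 8 * m - m ^ 2 := Real.sq_sqrt (by nlinarith)
  refine ⟨dispersion0_eq_zero_of_sq_eq m _ hm2 hr, ?_⟩
  convert dispersion0_eq_zero_of_sq_eq m (-Real.sqrt (8 * m - m ^ 2)) hm2 (by rwa [neg_sq]) using 2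
  push_cast
  ring
end

section
/- Let m > 2 and let λ ∈ ℂ be any root of the quadratic 4λ² + (6m−m²)λ + 2m = 0. Then Re λ ≥ −(m+2)/4. Moreover: if 2 < m < 6 then Re λ < 0; if m = 6 then the roots are exactly ±√3·i; and if m > 6 then Re λ > 0. -/
open Complex

/-!
Every bound is an instance of the Routh–Hurwitz criterion in degree two: a root of
`a z² + b z + c` with `a, b, c > 0` has negative real part, since a real root cannot be
nonnegative and a nonreal one has real part `-b / (2a)`. For `m < 6` this applies to `λ`
itself and for `m > 6` to `-λ`. For the lower bound it applies to `-(λ + (m + 2) / 4)`,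
a root of `4 w² + (m - 2)² w + (m + 1)(m - 2)² / 4`. At `m = 6` the equation is `λ² = -3`.
-/

theorem Complex.re_neg_of_quadratic_eq_zero {a b c : ℝ} (ha : 0 < a) (hb : 0 < b) (hc : 0 < c)
    {z : ℂ} (hz : (a : ℂ) * z ^ 2 + b * z + c = 0) : z.re < 0 := by
  have hre : a * (z.re ^ 2 - z.im ^ 2) + b * z.re + c = 0 := by
    simpa [sq] using congrArg re hz
  have him : z.im * (2 * a * z.re + b) = 0 := by
    have := congrArg im hz
    simp only [sq, add_im, mul_im, mul_re, ofReal_re, ofReal_im, zero_im] at this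
    linear_combination this
  rcases mul_eq_zero.1 him with hreal | hvertex
  · rw [hreal] at hre
    nlinarith
  · nlinarith

theorem Complex.sq_eq_neg_three_iff {z : ℂ} :
    z ^ 2 = -3 ↔ z = Real.sqrt 3 * I ∨ z = -(Real.sqrt 3 * I) := by
  have hsq : ((Real.sqrt 3 : ℝ) * I : ℂ) ^ 2 = -3 := by
    rw [mul_pow, ← ofReal_pow, Real.sq_sqrt (by norm_num), I_sq]
    push_cast
    ring
  rw [← hsq, sq_eq_sq_iff_eq_or_eq_neg]

/-- for m > 2, any complex root λ of 4λ² + (6m−m²)λ + 2m = 0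
satisfies Re λ ≥ −(m+2)/4; if m < 6 then Re λ < 0; if m = 6 the roots are
exactly ±√3·i (any root is one of them, and both are indeed roots); if m > 6
then Re λ > 0. -/
theorem quadratic_roots_real_part (m : ℝ) (hm : 2 < m) (l : ℂ)
    (hroot : 4 * l ^ 2 + ((6 * m - m ^ 2 : ℝ) : ℂ) * l + ((2 * m : ℝ) : ℂ) = 0) :
    -(m + 2) / 4 ≤ l.re ∧
    (m < 6 → l.re < 0) ∧
    (m = 6 →
      (l = Real.sqrt 3 * Complex.I ∨ l = -(Real.sqrt 3 * Complex.I)) ∧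
      (∀ w : ℂ, w = Real.sqrt 3 * Complex.I ∨ w = -(Real.sqrt 3 * Complex.I) →
        4 * w ^ 2 + ((6 * m - m ^ 2 : ℝ) : ℂ) * w + ((2 * m : ℝ) : ℂ) = 0)) ∧
    (6 < m → 0 < l.re) := by
  have hm0 : 0 < m := by linarith
  have hm2 : 0 < (m - 2) ^ 2 := pow_pos (sub_pos.2 hm) 2
  refine ⟨?_, fun hm6 => ?_, fun hm6 => ?_, fun hm6 => ?_⟩
  · have := re_neg_of_quadratic_eq_zero (a := 4) (b := (m - 2) ^ 2)
      (c := (m + 1) * (m - 2) ^ 2 / 4) (z := -(l + (m + 2) / 4)) (by norm_num) hm2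
      (by positivity) (by push_cast at hroot ⊢; linear_combination hroot)
    norm_num at this
    linarith
  · exact re_neg_of_quadratic_eq_zero (a := 4) (b := 6 * m - m ^ 2) (c := 2 * m)
      (by norm_num) (by nlinarith) (by positivity) (by push_cast at hroot ⊢; exact hroot)
  · subst hm6
    have hroot_iff : ∀ w : ℂ, 4 * w ^ 2 + ((6 * 6 - 6 ^ 2 : ℝ) : ℂ) * w + ((2 * 6 : ℝ) : ℂ) = 0 ↔
        w ^ 2 = -3 := fun w => by
      push_cast
      exact ⟨fun h => by linear_combination h / 4, fun h => by linear_combination 4 * h⟩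
    exact ⟨sq_eq_neg_three_iff.1 ((hroot_iff l).1 hroot),
      fun w hw => (hroot_iff w).2 (sq_eq_neg_three_iff.2 hw)⟩
  · have := re_neg_of_quadratic_eq_zero (a := 4) (b := m ^ 2 - 6 * m) (c := 2 * m) (z := -l)
      (by norm_num) (by nlinarith) (by positivity)
      (by push_cast at hroot ⊢; linear_combination hroot)
    simpa using this
end
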